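/- Let n ≥ 1 and let X_n = {(σ₁,σ₂) ∈ S_n × S_n : ⟨σ₁,σ₂⟩ acts transitively on {1,…,n}}. Consider the action of the group S_{n-1} = {π ∈ S_n : π(n) = n} on X_n by coordinate-wise conjugation. Then every orbit of this action has exactly (n-1)! elements. -/

import Mathlib

/-!
The orbit is the image of the point stabilizer `Stab(a) ≅ S_{n-1}` under
`π ↦ (πσ₁π⁻¹, πσ₂π⁻¹)`, so it suffices that this map is injective there. If two
permutations `π₁, π₂` fixing `a` give the same pair, then `π₂⁻¹π₁` centralizes
`⟨σ₁, σ₂⟩` and fixes `a`; since `⟨σ₁, σ₂⟩` is transitive, a centralizing permutation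
fixing one point fixes every point. Orbit–stabilizer gives `|Stab(a)| = (n-1)!`.
-/

open Equiv MulAction

theorem Commute.inv_mul_of_conj_eq {G : Type*} [Group G] {a b g : G}
    (h : a * g * a⁻¹ = b * g * b⁻¹) : Commute (b⁻¹ * a) g :=
  calc b⁻¹ * a * g = b⁻¹ * (a * g * a⁻¹) * a := by group
    _ = b⁻¹ * (b * g * b⁻¹) * a := by rw [h]
    _ = g * (b⁻¹ * a) := by group

namespace Equiv.Perm

variable {α : Type*}

theorem card_stabilizer [Finite α] (a : α) :
    Nat.card (stabilizer (Perm α) a) = (Nat.card α - 1).factorial := by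
  have : Nonempty α := ⟨a⟩
  have h := (stabilizer (Perm α) a).card_mul_index
  rw [index_stabilizer, orbit_eq_univ, Set.ncard_univ, Nat.card_perm,
    ← Nat.mul_factorial_pred Nat.card_pos.ne', mul_comm] at h
  exact Nat.eq_of_mul_eq_mul_left Nat.card_pos h

theorem eq_one_of_mem_centralizer_of_mem_stabilizer {H : Subgroup (Perm α)} {τ : Perm α}
    {a : α} (hτ : τ ∈ Subgroup.centralizer H) (hH : ∀ x, ∃ g ∈ H, g a = x)
    (ha : τ ∈ stabilizer (Perm α) a) : τ = 1 := by
  ext x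
  obtain ⟨g, hg, rfl⟩ := hH x
  have hτa : τ a = a := ha
  calc τ (g a) = (τ * g) a := rfl
    _ = (g * τ) a := by rw [Subgroup.mem_centralizer_iff.mp hτ g hg]
    _ = g a := by rw [mul_apply, hτa]

theorem injOn_conj_pair_stabilizer {σ₁ σ₂ : Perm α} {a : α}
    (htrans : ∀ x, ∃ g ∈ Subgroup.closure {σ₁, σ₂}, g a = x) :
    Set.InjOn (fun π : Perm α ↦ (π * σ₁ * π⁻¹, π * σ₂ * π⁻¹)) (stabilizer (Perm α) a) := by
  intro π₁ h₁ π₂ h₂ he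
  obtain ⟨e₁, e₂⟩ := Prod.ext_iff.mp he
  have hcent : π₂⁻¹ * π₁ ∈ Subgroup.centralizer (Subgroup.closure {σ₁, σ₂}) := by
    rw [Subgroup.centralizer_closure, Subgroup.mem_centralizer_iff]
    rintro _ (rfl | rfl)
    exacts [(Commute.inv_mul_of_conj_eq e₁).eq.symm, (Commute.inv_mul_of_conj_eq e₂).eq.symm]
  have hfix : π₂⁻¹ * π₁ ∈ stabilizer (Perm α) a := mul_mem (inv_mem h₂) h₁
  exact (inv_mul_eq_one.mp (eq_one_of_mem_centralizer_of_mem_stabilizer hcent htrans hfix)).symm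

end Equiv.Perm

/-- the orbit of a transitive pair `(σ₁,σ₂)` under coordinate-wise
conjugation by permutations fixing `n` has exactly `(n-1)!` elements. -/
theorem stmt2 (n : ℕ) (hn : 1 ≤ n) (σ₁ σ₂ : Equiv.Perm (Fin n))
    (htrans : ∀ x y : Fin n,
      ∃ g ∈ Subgroup.closure ({σ₁, σ₂} : Set (Equiv.Perm (Fin n))), g x = y) :
    Set.ncard { p : Equiv.Perm (Fin n) × Equiv.Perm (Fin n) |
      ∃ π : Equiv.Perm (Fin n), π ⟨n - 1, by omega⟩ = ⟨n - 1, by omega⟩ ∧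
        p = (π * σ₁ * π⁻¹, π * σ₂ * π⁻¹) } = Nat.factorial (n - 1) := by
  set a : Fin n := ⟨n - 1, by omega⟩
  have horbit : { p : Perm (Fin n) × Perm (Fin n) | ∃ π : Perm (Fin n), π a = a ∧
      p = (π * σ₁ * π⁻¹, π * σ₂ * π⁻¹) } =
      (fun π : Perm (Fin n) ↦ (π * σ₁ * π⁻¹, π * σ₂ * π⁻¹)) '' stabilizer (Perm (Fin n)) a := by
    ext p
    simp [eq_comm, Perm.smul_def]
  rw [horbit, (Perm.injOn_conj_pair_stabilizer (htrans a)).ncard_image, ← Nat.card_coe_set_eq,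
    SetLike.coe_sort_coe, Perm.card_stabilizer, Nat.card_eq_fintype_card, Fintype.card_fin]
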